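/- Let d ≥ 3 be an integer, p a prime, n a positive integer with nd even, and fix v ∈ F_p^n with Φ(v) = (n_0, n_1, …, n_{p−1}). Let ℳ(n_0,…,n_{p−1}) be the set of p×p symmetric matrices M = [m_{ij}]_{0≤i,j≤p−1} with nonnegative integer entries such that every diagonal entry m_{ii} is even, Σ_{j=0}^{p−1} m_{ij} = d·n_i for every i, and Σ_{j=0}^{p−1} j·m_{ij} ≡ 0 (mod p) for every i. Then the number of fixed-point-free involutions σ of [n]×[d] with A(σ)·v = 0 over F_p equals Σ_{M ∈ ℳ(n_0,…,n_{p−1})} (∏_{0≤i<j≤p−1} m_{ij}!) · (∏_{i=0}^{p−1} m_{ii}!/(2^{m_{ii}/2}(m_{ii}/2)!)) · ∏_{i=0}^{p−1} #{(a¹,…,a^{n_i}) ∈ (Z_{d,p})^{n_i} : Σ_{k=1}^{n_i} Φ(aᵏ) = (m_{i0}, m_{i1}, …, m_{i,p−1})}. -/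
import Mathlib

open Finset

set_option linter.unusedSectionVars false
set_option linter.unusedVariables false

/-- Adjacency matrix of the configuration model. -/
def adjMat (n d : ℕ) (σ : Equiv.Perm (Fin n × Fin d)) : Matrix (Fin n) (Fin n) ℤ :=
  fun k l => ((Finset.univ.filter (fun i : Fin d => (σ (k, i)).1 = l)).card : ℤ)

/-- The counting map `Φ` : the `j`-th coordinate of `Φ(a)` is `#{r : a r = j}`. -/
def Phi {d p : ℕ} (a : Fin d → ZMod p) (j : ZMod p) : ℕ :=
  (Finset.univ.filter (fun r : Fin d => a r = j)).card

/-- `Φ` applied to a vector `v ∈ 𝔽_p^n` coordinate-countwise: `#{k : v k = j}`. -/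
def countv {n p : ℕ} (v : Fin n → ZMod p) (j : ZMod p) : ℕ :=
  (Finset.univ.filter (fun k : Fin n => v k = j)).card

/-- number of fixed point free involutions of an `m`-element set (pattern-counting
helper): `gg 0 = 1`, `gg 1 = 0`, `gg (n+2) = (n+1) * gg n`. -/
def gg : ℕ → ℕ
  | 0 => 1
  | 1 => 0
  | (n+2) => (n+1) * gg n

def ff (a b : ℕ) : ℕ := if a = b then a.factorial else 0

lemma gg_succ (m : ℕ) (hm : 1 ≤ m) : gg m = (m - 1) * gg (m - 2) := by
  match m, hm with
  | 1, _ => simp [gg]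
  | (n+2), _ => simp [gg]

lemma gg_odd (m : ℕ) (hm : ¬ Even m) : gg m = 0 := by
  induction m using Nat.strong_induction_on with
  | _ m ih =>
    match m, hm with
    | 1, _ => simp [gg]
    | (n+2), hm =>
      have : ¬ Even n := by simpa [Nat.even_add] using hm
      simp [gg, ih n (by omega) this]

lemma gg_two_mul (k : ℕ) : gg (2 * k) * (2 ^ k * k.factorial) = (2 * k).factorial := by
  induction k with
  | zero => simp [gg]
  | succ k ih =>
    have h2 : 2 * (k + 1) = (2 * k) + 2 := by ring
    rw [h2]
    show ((2*k)+1) * gg (2*k) * (2 ^ (k+1) * (k+1).factorial) = ((2*k)+2).factorial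
    rw [Nat.factorial_succ, Nat.factorial_succ, Nat.factorial_succ, pow_succ]
    calc ((2*k)+1) * gg (2*k) * (2 ^ k * 2 * ((k+1) * k.factorial))
        = ((2*k)+2) * (((2*k)+1) * (gg (2*k) * (2^k * k.factorial))) := by ring
      _ = ((2*k)+2) * (((2*k)+1) * (2*k).factorial) := by rw [ih]

lemma gg_cast_q (m : ℕ) (hm : Even m) :
    (gg m : ℚ) = (m.factorial : ℚ) / (2 ^ (m / 2) * ((m / 2).factorial : ℚ)) := by
  obtain ⟨k, rfl⟩ := hm
  have hk : k + k = 2 * k := by ring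
  rw [hk]
  have h2 : (2 * k) / 2 = k := by omega
  rw [h2, eq_div_iff (by positivity)]
  exact_mod_cast congrArg (fun x : ℕ => (x : ℚ)) (gg_two_mul k)

lemma ff_succ (a b : ℕ) (ha : 1 ≤ a) : ff a b = b * ff (a - 1) (b - 1) := by
  rcases Nat.eq_zero_or_pos b with hb | hb
  · subst hb
    have : a ≠ 0 := by omega
    simp [ff, this]
  · by_cases h : a = b
    · subst h
      simp [ff]
      conv_lhs => rw [← Nat.succ_pred_eq_of_pos ha]
      rw [Nat.factorial_succ]
      have h1 : a.pred + 1 = a := Nat.succ_pred_eq_of_pos ha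
      have h2 : a.pred = a - 1 := rfl
      rw [h1, h2]
    · have h' : ¬ (a - 1 = b - 1) := by omega
      simp [ff, h, h']

lemma ff_succ' (a b : ℕ) (ha : 1 ≤ a) : ff b a = b * ff (b - 1) (a - 1) := by
  rcases Nat.eq_zero_or_pos b with hb | hb
  · subst hb; simp [ff]
    omega
  · by_cases h : a = b
    · subst h
      simp [ff]
      conv_lhs => rw [← Nat.succ_pred_eq_of_pos ha]
      rw [Nat.factorial_succ]
      have h1 : a.pred + 1 = a := Nat.succ_pred_eq_of_pos ha
      have h2 : a.pred = a - 1 := rfl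
      rw [h1, h2]
    · have h' : ¬ (b - 1 = a - 1) := by omega
      have h'' : ¬ (b = a) := fun h'' => h h''.symm
      simp [ff, h', h'']

section Core
variable {X : Type*} [Fintype X] [DecidableEq X] {p : ℕ} [NeZero p]

def colCount (col : X → ZMod p × ZMod p) (s : Finset X) (i j : ZMod p) : ℕ :=
  (s.filter (fun x => col x = (i, j))).card

def FFc (col : X → ZMod p × ZMod p) (s : Finset X) : ℕ :=
  (∏ q ∈ Finset.univ.filter (fun q : ZMod p × ZMod p => q.1.val < q.2.val),
      ff (colCount col s q.1 q.2) (colCount col s q.2 q.1)) *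
  ∏ i : ZMod p, gg (colCount col s i i)

def InvS (col : X → ZMod p × ZMod p) (s : Finset X) : Finset (Equiv.Perm X) :=
  Finset.univ.filter (fun σ => (∀ x, σ (σ x) = x) ∧
    (∀ x ∈ s, σ x ≠ x ∧ col (σ x) = (col x).swap) ∧ (∀ x ∉ s, σ x = x))

lemma colCount_erase (col : X → ZMod p × ZMod p) {t : Finset X} {x : X} (hx : x ∈ t)
    (i j : ZMod p) :
    colCount col (t.erase x) i j = colCount col t i j - (if col x = (i, j) then 1 else 0) := by
  unfold colCount
  rw [Finset.filter_erase]
  by_cases h : col x = (i, j)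
  · rw [Finset.card_erase_of_mem (Finset.mem_filter.2 ⟨hx, h⟩)]
    simp [h]
  · have hx' : x ∉ Finset.filter (fun x => col x = (i, j)) t :=
      fun hm => h (Finset.mem_filter.1 hm).2
    rw [Finset.erase_eq_of_notMem hx']
    simp [h]

set_option maxHeartbeats 1600000 in
theorem card_InvS (col : X → ZMod p × ZMod p) (s : Finset X) :
    (InvS col s).card = FFc col s := by
  induction s using Finset.strongInduction with
  | _ s ih =>
  rcases s.eq_empty_or_nonempty with rfl | hs
  · have h1 : InvS col (∅ : Finset X) = {1} := by
      ext σ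
      simp only [InvS, mem_filter, mem_univ, true_and, Finset.notMem_empty, mem_singleton]
      constructor
      · rintro ⟨-, -, h3⟩
        exact Equiv.ext fun x => h3 x (by simp)
      · rintro rfl
        exact ⟨fun x => rfl, fun x hx => absurd hx (by simp), fun x _ => rfl⟩
    rw [h1]
    simp [FFc, colCount, ff, gg]
  obtain ⟨x₀, hx₀⟩ := hs
  obtain ⟨⟨i₀, j₀⟩, hcolx₀⟩ : ∃ q, col x₀ = q := ⟨col x₀, rfl⟩
  set cand : Finset X := (s.erase x₀).filter (fun y => col y = (j₀, i₀)) with hcand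
  -- membership facts for σ ∈ InvS col s
  have hmem : ∀ σ ∈ InvS col s, (∀ x, σ (σ x) = x) ∧
      (∀ x ∈ s, σ x ≠ x ∧ col (σ x) = (col x).swap) ∧ (∀ x ∉ s, σ x = x) := by
    intro σ hσ
    exact (Finset.mem_filter.1 hσ).2
  have hmaps : ∀ σ ∈ InvS col s, σ x₀ ∈ cand := by
    intro σ hσ
    obtain ⟨h1, h2, h3⟩ := hmem σ hσ
    have hne : σ x₀ ≠ x₀ := (h2 x₀ hx₀).1
    have hcol : col (σ x₀) = (j₀, i₀) := by
      rw [(h2 x₀ hx₀).2, hcolx₀]; rfl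
    have hmem' : σ x₀ ∈ s := by
      by_contra hno
      have := h3 _ hno
      rw [h1 x₀] at this
      exact hne this.symm
    exact Finset.mem_filter.2 ⟨Finset.mem_erase.2 ⟨hne, hmem'⟩, hcol⟩
  have hsum := Finset.card_eq_sum_card_fiberwise hmaps
  -- fiber bijection
  have hfiber : ∀ y ∈ cand,
      ((InvS col s).filter (fun σ => σ x₀ = y)).card
        = (InvS col ((s.erase x₀).erase y)).card := by
    intro y hy
    obtain ⟨hy', hycol⟩ := Finset.mem_filter.1 hy
    obtain ⟨hyne, hys⟩ := Finset.mem_erase.1 hy'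
    set s' : Finset X := (s.erase x₀).erase y with hs'
    have hx₀s' : x₀ ∉ s' := fun h => (Finset.mem_erase.1 (Finset.mem_erase.1 h).2).1 rfl
    have hys' : y ∉ s' := fun h => (Finset.mem_erase.1 h).1 rfl
    have hsub : ∀ x, x ∈ s' ↔ (x ∈ s ∧ x ≠ x₀ ∧ x ≠ y) := by
      intro x
      simp only [hs', Finset.mem_erase]
      tauto
    apply Finset.card_bij' (fun σ _ => σ * Equiv.swap x₀ y) (fun τ _ => τ * Equiv.swap x₀ y)
    · -- forward maps into InvS s'
      intro σ hσ
      obtain ⟨hσ1, hσy⟩ := Finset.mem_filter.1 hσ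
      obtain ⟨h1, h2, h3⟩ := hmem σ hσ1
      have hσy' : σ y = x₀ := by rw [← hσy, h1]
      refine Finset.mem_filter.2 ⟨Finset.mem_univ _, ?_, ?_, ?_⟩
      · intro x
        simp only [Equiv.Perm.mul_apply]
        rcases eq_or_ne x x₀ with rfl | hxx₀
        · rw [Equiv.swap_apply_left, hσy', Equiv.swap_apply_left, hσy']
        rcases eq_or_ne x y with rfl | hxy
        · rw [Equiv.swap_apply_right, hσy, Equiv.swap_apply_right, hσy]
        · rw [Equiv.swap_apply_of_ne_of_ne hxx₀ hxy]
          have hne1 : σ x ≠ x₀ := by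
            intro h
            exact hxy (by rw [← h1 x, h, hσy])
          have hne2 : σ x ≠ y := by
            intro h
            exact hxx₀ (by rw [← h1 x, h, hσy'])
          rw [Equiv.swap_apply_of_ne_of_ne hne1 hne2, h1]
      · intro x hx
        obtain ⟨hxs, hxx₀, hxy⟩ := (hsub x).1 hx
        simp only [Equiv.Perm.mul_apply]
        rw [Equiv.swap_apply_of_ne_of_ne hxx₀ hxy]
        exact h2 x hxs
      · intro x hx
        simp only [Equiv.Perm.mul_apply]
        rcases eq_or_ne x x₀ with rfl | hxx₀
        · rw [Equiv.swap_apply_left, hσy']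
        rcases eq_or_ne x y with rfl | hxy
        · rw [Equiv.swap_apply_right, hσy]
        · have hxs : x ∉ s := by
            intro hxs
            exact hx ((hsub x).2 ⟨hxs, hxx₀, hxy⟩)
          rw [Equiv.swap_apply_of_ne_of_ne hxx₀ hxy]
          exact h3 x hxs
    · -- backward maps into fiber
      intro τ hτ
      obtain ⟨-, h1, h2, h3⟩ := Finset.mem_filter.1 hτ
      have hτx₀ : τ x₀ = x₀ := h3 x₀ hx₀s'
      have hτy : τ y = y := h3 y hys'
      refine Finset.mem_filter.2 ⟨?_, ?_⟩
      · refine Finset.mem_filter.2 ⟨Finset.mem_univ _, ?_, ?_, ?_⟩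
        · intro x
          simp only [Equiv.Perm.mul_apply]
          rcases eq_or_ne x x₀ with rfl | hxx₀
          · rw [Equiv.swap_apply_left, hτy, Equiv.swap_apply_right, hτx₀]
          rcases eq_or_ne x y with rfl | hxy
          · rw [Equiv.swap_apply_right, hτx₀, Equiv.swap_apply_left, hτy]
          · rw [Equiv.swap_apply_of_ne_of_ne hxx₀ hxy]
            have hne1 : τ x ≠ x₀ := by
              intro h
              exact hxx₀ (by rw [← h1 x, h, hτx₀])
            have hne2 : τ x ≠ y := by
              intro h
              exact hxy (by rw [← h1 x, h, hτy])
            rw [Equiv.swap_apply_of_ne_of_ne hne1 hne2, h1]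
        · intro x hx
          simp only [Equiv.Perm.mul_apply]
          rcases eq_or_ne x x₀ with rfl | hxx₀
          · rw [Equiv.swap_apply_left, hτy]
            exact ⟨hyne, by rw [hycol, hcolx₀]; rfl⟩
          rcases eq_or_ne x y with rfl | hxy
          · rw [Equiv.swap_apply_right, hτx₀]
            refine ⟨Ne.symm hyne, ?_⟩
            rw [hcolx₀, hycol]
            rfl
          · rw [Equiv.swap_apply_of_ne_of_ne hxx₀ hxy]
            exact h2 x ((hsub x).2 ⟨hx, hxx₀, hxy⟩)
        · intro x hx
          simp only [Equiv.Perm.mul_apply]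
          have hxx₀ : x ≠ x₀ := fun h => hx (h ▸ hx₀)
          have hxy : x ≠ y := fun h => hx (h ▸ hys)
          rw [Equiv.swap_apply_of_ne_of_ne hxx₀ hxy]
          exact h3 x (fun h => hx ((hsub x).1 h).1)
      · show (τ * Equiv.swap x₀ y) x₀ = y
        simp only [Equiv.Perm.mul_apply]
        rw [Equiv.swap_apply_left, hτy]
    · intro σ _
      rw [mul_assoc, Equiv.swap_mul_self, mul_one]
    · intro τ _
      rw [mul_assoc, Equiv.swap_mul_self, mul_one]
  have pe : ∀ {a b c d : ZMod p}, (a, c) = (b, d) → a = b ∧ c = d :=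
    fun h => ⟨congrArg Prod.fst h, congrArg Prod.snd h⟩
  -- the adjusted count function
  set m' : ZMod p → ZMod p → ℕ := fun i j =>
    colCount col s i j -
      ((if (i₀, j₀) = (i, j) then 1 else 0) + (if (j₀, i₀) = (i, j) then 1 else 0)) with hm'
  set E : ℕ :=
    (∏ q ∈ Finset.univ.filter (fun q : ZMod p × ZMod p => q.1.val < q.2.val),
        ff (m' q.1 q.2) (m' q.2 q.1)) * ∏ i : ZMod p, gg (m' i i) with hE
  have hm'ne : ∀ i j : ZMod p, ¬ (i₀, j₀) = (i, j) → ¬ (j₀, i₀) = (i, j) →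
      m' i j = colCount col s i j := by
    intro i j h1 h2
    show colCount col s i j -
      ((if (i₀, j₀) = (i, j) then 1 else 0) + (if (j₀, i₀) = (i, j) then 1 else 0))
        = colCount col s i j
    rw [if_neg h1, if_neg h2]
    omega
  have hFF' : ∀ y ∈ cand, FFc col ((s.erase x₀).erase y) = E := by
    intro y hy
    obtain ⟨hy', hycol⟩ := Finset.mem_filter.1 hy
    have hcc : ∀ i j, colCount col ((s.erase x₀).erase y) i j = m' i j := by
      intro i j
      rw [colCount_erase col hy' i j, colCount_erase col hx₀ i j, hycol, hcolx₀, Nat.sub_sub]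
    unfold FFc
    rw [hE]
    congr 1
    · exact Finset.prod_congr rfl (fun q _ => by rw [hcc, hcc])
    · exact Finset.prod_congr rfl (fun i _ => by rw [hcc])
  have hsum2 : (InvS col s).card = cand.card * E := by
    rw [hsum, Finset.sum_congr rfl (fun y hy => by
      rw [hfiber y hy,
        ih _ (Finset.ssubset_of_subset_of_ssubset (Finset.erase_subset _ _)
          (Finset.erase_ssubset hx₀)),
        hFF' y hy]), Finset.sum_const, smul_eq_mul]
  rw [hsum2]
  -- candidate count
  have hcandcard : cand.card
      = colCount col s j₀ i₀ - (if (i₀, j₀) = (j₀, i₀) then 1 else 0) := by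
    have h0 : cand.card = colCount col (s.erase x₀) j₀ i₀ := rfl
    rw [h0, colCount_erase col hx₀, hcolx₀]
  have hx₀mem : x₀ ∈ s.filter (fun x => col x = (i₀, j₀)) :=
    Finset.mem_filter.2 ⟨hx₀, hcolx₀⟩
  have ha1 : 1 ≤ colCount col s i₀ j₀ := Finset.card_pos.2 ⟨x₀, hx₀mem⟩
  by_cases hij : i₀ = j₀
  · -- diagonal case
    subst hij
    have hcandA : cand.card = colCount col s i₀ i₀ - 1 := by rw [hcandcard, if_pos rfl]
    have hOff : (∏ q ∈ Finset.univ.filter (fun q : ZMod p × ZMod p => q.1.val < q.2.val),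
        ff (m' q.1 q.2) (m' q.2 q.1))
        = ∏ q ∈ Finset.univ.filter (fun q : ZMod p × ZMod p => q.1.val < q.2.val),
          ff (colCount col s q.1 q.2) (colCount col s q.2 q.1) := by
      refine Finset.prod_congr rfl (fun q hq => ?_)
      have hlt : q.1.val < q.2.val := (Finset.mem_filter.1 hq).2
      have h12 : q.1 ≠ q.2 := fun h => by rw [h] at hlt; exact lt_irrefl _ hlt
      rw [hm'ne q.1 q.2 (fun h => h12 ((pe h).1.symm.trans (pe h).2))
          (fun h => h12 ((pe h).1.symm.trans (pe h).2)),
        hm'ne q.2 q.1 (fun h => h12 ((pe h).2.symm.trans (pe h).1))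
          (fun h => h12 ((pe h).2.symm.trans (pe h).1))]
    have hDiag : gg (colCount col s i₀ i₀)
          * ∏ i ∈ Finset.univ.erase i₀, gg (colCount col s i i)
        = ∏ i : ZMod p, gg (colCount col s i i) :=
      Finset.mul_prod_erase Finset.univ (fun i => gg (colCount col s i i)) (Finset.mem_univ i₀)
    have hDiag' : gg (m' i₀ i₀) * ∏ i ∈ Finset.univ.erase i₀, gg (m' i i)
        = ∏ i : ZMod p, gg (m' i i) :=
      Finset.mul_prod_erase Finset.univ (fun i => gg (m' i i)) (Finset.mem_univ i₀)
    have hR : (∏ i ∈ Finset.univ.erase i₀, gg (m' i i))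
        = ∏ i ∈ Finset.univ.erase i₀, gg (colCount col s i i) := by
      refine Finset.prod_congr rfl (fun i hi => ?_)
      have hne : i ≠ i₀ := (Finset.mem_erase.1 hi).1
      rw [hm'ne i i (fun h => hne ((pe h).1.symm)) (fun h => hne ((pe h).1.symm))]
    have hmii : m' i₀ i₀ = colCount col s i₀ i₀ - 2 := by
      show colCount col s i₀ i₀ - ((if ((i₀ : ZMod p), (i₀ : ZMod p)) = (i₀, i₀) then 1 else 0)
        + (if ((i₀ : ZMod p), (i₀ : ZMod p)) = (i₀, i₀) then 1 else 0)) = _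
      rw [if_pos rfl]
    unfold FFc
    rw [hE, hOff, ← hDiag, ← hDiag', hR, hmii, hcandA,
      gg_succ (colCount col s i₀ i₀) ha1]
    ring
  · -- off-diagonal case
    have hne1 : ¬ ((j₀, i₀) : ZMod p × ZMod p) = (i₀, j₀) := fun h => hij ((pe h).1).symm
    have hne2 : ¬ ((i₀, j₀) : ZMod p × ZMod p) = (j₀, i₀) := fun h => hij ((pe h).1)
    have hb : cand.card = colCount col s j₀ i₀ := by
      rw [hcandcard, if_neg hne2, Nat.sub_zero]
    have hdiagcongr : (∏ i : ZMod p, gg (m' i i)) = ∏ i : ZMod p, gg (colCount col s i i) :=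
      Finset.prod_congr rfl (fun i _ => by
        refine congrArg gg (hm'ne i i (fun h => hij ?_) (fun h => hij ?_))
        · rw [(pe h).1, (pe h).2]
        · rw [(pe h).2, (pe h).1]
      )
    have hvne : i₀.val ≠ j₀.val := fun h => hij (ZMod.val_injective p h)
    have hm'a : m' i₀ j₀ = colCount col s i₀ j₀ - 1 := by
      show colCount col s i₀ j₀ - ((if ((i₀ : ZMod p), (j₀ : ZMod p)) = (i₀, j₀) then 1 else 0)
        + (if ((j₀ : ZMod p), (i₀ : ZMod p)) = (i₀, j₀) then 1 else 0)) = _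
      rw [if_pos rfl, if_neg hne1]
    have hm'b : m' j₀ i₀ = colCount col s j₀ i₀ - 1 := by
      show colCount col s j₀ i₀ - ((if ((i₀ : ZMod p), (j₀ : ZMod p)) = (j₀, i₀) then 1 else 0)
        + (if ((j₀ : ZMod p), (i₀ : ZMod p)) = (j₀, i₀) then 1 else 0)) = _
      rw [if_pos rfl, if_neg hne2]
    rcases lt_or_gt_of_ne hvne with hlt | hgt
    · have hq₀ : ((i₀, j₀) : ZMod p × ZMod p) ∈
          Finset.univ.filter (fun q : ZMod p × ZMod p => q.1.val < q.2.val) :=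
        Finset.mem_filter.2 ⟨Finset.mem_univ _, hlt⟩
      have hP : ff (colCount col s i₀ j₀) (colCount col s j₀ i₀)
            * ∏ q ∈ (Finset.univ.filter
                (fun q : ZMod p × ZMod p => q.1.val < q.2.val)).erase (i₀, j₀),
              ff (colCount col s q.1 q.2) (colCount col s q.2 q.1)
          = ∏ q ∈ Finset.univ.filter (fun q : ZMod p × ZMod p => q.1.val < q.2.val),
              ff (colCount col s q.1 q.2) (colCount col s q.2 q.1) :=
        Finset.mul_prod_erase _
          (fun q : ZMod p × ZMod p => ff (colCount col s q.1 q.2) (colCount col s q.2 q.1)) hq₀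
      have hP' : ff (m' i₀ j₀) (m' j₀ i₀)
            * ∏ q ∈ (Finset.univ.filter
                (fun q : ZMod p × ZMod p => q.1.val < q.2.val)).erase (i₀, j₀),
              ff (m' q.1 q.2) (m' q.2 q.1)
          = ∏ q ∈ Finset.univ.filter (fun q : ZMod p × ZMod p => q.1.val < q.2.val),
              ff (m' q.1 q.2) (m' q.2 q.1) :=
        Finset.mul_prod_erase _
          (fun q : ZMod p × ZMod p => ff (m' q.1 q.2) (m' q.2 q.1)) hq₀
      have hRest : (∏ q ∈ (Finset.univ.filter
            (fun q : ZMod p × ZMod p => q.1.val < q.2.val)).erase (i₀, j₀),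
            ff (m' q.1 q.2) (m' q.2 q.1))
          = ∏ q ∈ (Finset.univ.filter
            (fun q : ZMod p × ZMod p => q.1.val < q.2.val)).erase (i₀, j₀),
            ff (colCount col s q.1 q.2) (colCount col s q.2 q.1) := by
        refine Finset.prod_congr rfl (fun q hq => ?_)
        obtain ⟨hqne, hqf⟩ := Finset.mem_erase.1 hq
        have hqlt : q.1.val < q.2.val := (Finset.mem_filter.1 hqf).2
        have e1 : ¬ ((i₀, j₀) : ZMod p × ZMod p) = (q.1, q.2) :=
          fun h => hqne (Prod.ext (pe h).1.symm (pe h).2.symm)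
        have e2 : ¬ ((j₀, i₀) : ZMod p × ZMod p) = (q.1, q.2) := by
          intro h
          rw [← (pe h).1, ← (pe h).2] at hqlt
          omega
        have e3 : ¬ ((i₀, j₀) : ZMod p × ZMod p) = (q.2, q.1) := by
          intro h
          rw [← (pe h).1, ← (pe h).2] at hqlt
          omega
        have e4 : ¬ ((j₀, i₀) : ZMod p × ZMod p) = (q.2, q.1) :=
          fun h => hqne (Prod.ext (pe h).2.symm (pe h).1.symm)
        rw [hm'ne q.1 q.2 e1 e2, hm'ne q.2 q.1 e3 e4]
      unfold FFc
      rw [hE, hdiagcongr, ← hP', hRest, hm'a, hm'b, ← hP, hb,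
        ff_succ (colCount col s i₀ j₀) (colCount col s j₀ i₀) ha1]
      ring
    · have hq₀ : ((j₀, i₀) : ZMod p × ZMod p) ∈
          Finset.univ.filter (fun q : ZMod p × ZMod p => q.1.val < q.2.val) :=
        Finset.mem_filter.2 ⟨Finset.mem_univ _, hgt⟩
      have hP : ff (colCount col s j₀ i₀) (colCount col s i₀ j₀)
            * ∏ q ∈ (Finset.univ.filter
                (fun q : ZMod p × ZMod p => q.1.val < q.2.val)).erase (j₀, i₀),
              ff (colCount col s q.1 q.2) (colCount col s q.2 q.1)
          = ∏ q ∈ Finset.univ.filter (fun q : ZMod p × ZMod p => q.1.val < q.2.val),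
              ff (colCount col s q.1 q.2) (colCount col s q.2 q.1) :=
        Finset.mul_prod_erase _
          (fun q : ZMod p × ZMod p => ff (colCount col s q.1 q.2) (colCount col s q.2 q.1)) hq₀
      have hP' : ff (m' j₀ i₀) (m' i₀ j₀)
            * ∏ q ∈ (Finset.univ.filter
                (fun q : ZMod p × ZMod p => q.1.val < q.2.val)).erase (j₀, i₀),
              ff (m' q.1 q.2) (m' q.2 q.1)
          = ∏ q ∈ Finset.univ.filter (fun q : ZMod p × ZMod p => q.1.val < q.2.val),
              ff (m' q.1 q.2) (m' q.2 q.1) :=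
        Finset.mul_prod_erase _
          (fun q : ZMod p × ZMod p => ff (m' q.1 q.2) (m' q.2 q.1)) hq₀
      have hRest : (∏ q ∈ (Finset.univ.filter
            (fun q : ZMod p × ZMod p => q.1.val < q.2.val)).erase (j₀, i₀),
            ff (m' q.1 q.2) (m' q.2 q.1))
          = ∏ q ∈ (Finset.univ.filter
            (fun q : ZMod p × ZMod p => q.1.val < q.2.val)).erase (j₀, i₀),
            ff (colCount col s q.1 q.2) (colCount col s q.2 q.1) := by
        refine Finset.prod_congr rfl (fun q hq => ?_)
        obtain ⟨hqne, hqf⟩ := Finset.mem_erase.1 hq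
        have hqlt : q.1.val < q.2.val := (Finset.mem_filter.1 hqf).2
        have e2 : ¬ ((j₀, i₀) : ZMod p × ZMod p) = (q.1, q.2) :=
          fun h => hqne (Prod.ext (pe h).1.symm (pe h).2.symm)
        have e1 : ¬ ((i₀, j₀) : ZMod p × ZMod p) = (q.1, q.2) := by
          intro h
          rw [← (pe h).1, ← (pe h).2] at hqlt
          omega
        have e4 : ¬ ((j₀, i₀) : ZMod p × ZMod p) = (q.2, q.1) := by
          intro h
          rw [← (pe h).1, ← (pe h).2] at hqlt
          omega
        have e3 : ¬ ((i₀, j₀) : ZMod p × ZMod p) = (q.2, q.1) :=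
          fun h => hqne (Prod.ext (pe h).2.symm (pe h).1.symm)
        rw [hm'ne q.1 q.2 e1 e2, hm'ne q.2 q.1 e3 e4]
      unfold FFc
      rw [hE, hdiagcongr, ← hP', hRest, hm'a, hm'b, ← hP, hb,
        ff_succ' (colCount col s i₀ j₀) (colCount col s j₀ i₀) ha1]
      ring
end Core


section App
variable {n d p : ℕ} [NeZero p]

/-- per-row matrix function -/
def FFM (p : ℕ) [NeZero p] (M : ZMod p → ZMod p → ℕ) : ℕ :=
  (∏ q ∈ Finset.univ.filter (fun q : ZMod p × ZMod p => q.1.val < q.2.val),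
      ff (M q.1 q.2) (M q.2 q.1)) * ∏ i : ZMod p, gg (M i i)

def colh (v : Fin n → ZMod p) (a : Fin n → Fin d → ZMod p) : Fin n × Fin d → ZMod p × ZMod p :=
  fun x => (v x.1, a x.1 x.2)

def Mof (v : Fin n → ZMod p) (a : Fin n → Fin d → ZMod p) : ZMod p → ZMod p → ℕ :=
  fun i j => ∑ k ∈ Finset.univ.filter (fun k => v k = i), Phi (a k) j

lemma mulVec_eq (σ : Equiv.Perm (Fin n × Fin d)) (v : Fin n → ZMod p) (k : Fin n) :
    Matrix.mulVec ((adjMat n d σ).map (Int.cast : ℤ → ZMod p)) v k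
      = ∑ r : Fin d, v ((σ (k, r)).1) := by
  have h1 : Matrix.mulVec ((adjMat n d σ).map (Int.cast : ℤ → ZMod p)) v k
      = ∑ l, (((Finset.univ.filter (fun r : Fin d => (σ (k, r)).1 = l)).card : ℕ) : ZMod p)
          * v l := by
    simp [Matrix.mulVec, Matrix.map_apply, adjMat, dotProduct]
  rw [h1]
  have h2 : ∀ l, (((Finset.univ.filter (fun r : Fin d => (σ (k, r)).1 = l)).card : ℕ) : ZMod p)
      * v l = ∑ r ∈ Finset.univ.filter (fun r : Fin d => (σ (k, r)).1 = l), v ((σ (k, r)).1) := by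
    intro l
    rw [Finset.sum_congr rfl (fun r hr => by rw [(Finset.mem_filter.1 hr).2]),
      Finset.sum_const, nsmul_eq_mul]
  rw [Finset.sum_congr rfl (fun l _ => h2 l)]
  exact Finset.sum_fiberwise Finset.univ (fun r => (σ (k, r)).1) (fun r => v ((σ (k, r)).1))

lemma colCount_univ (v : Fin n → ZMod p) (a : Fin n → Fin d → ZMod p) (i j : ZMod p) :
    colCount (colh v a) Finset.univ i j = Mof v a i j := by
  unfold colCount Mof colh
  rw [Finset.card_filter, Fintype.sum_prod_type, Finset.sum_filter]
  refine Finset.sum_congr rfl (fun k _ => ?_)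
  by_cases hv : v k = i
  · rw [if_pos hv]
    unfold Phi
    rw [Finset.card_filter]
    exact Finset.sum_congr rfl (fun r _ => by simp [Prod.mk.injEq, hv])
  · rw [if_neg hv]
    exact Finset.sum_eq_zero (fun r _ => by simp [Prod.mk.injEq, hv])

lemma Phi_total (a : Fin d → ZMod p) : ∑ j : ZMod p, Phi a j = d := by
  unfold Phi
  rw [Finset.sum_card_fiberwise_eq_card_filter]
  simp

lemma Phi_weighted (a : Fin d → ZMod p) :
    ∑ j : ZMod p, j * (Phi a j : ZMod p) = ∑ r, a r := by
  unfold Phi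
  have h : ∀ j : ZMod p, j * (((Finset.univ.filter (fun r : Fin d => a r = j)).card : ℕ) : ZMod p)
      = ∑ r ∈ Finset.univ.filter (fun r : Fin d => a r = j), a r := by
    intro j
    rw [Finset.sum_congr rfl (fun r hr => (Finset.mem_filter.1 hr).2),
      Finset.sum_const, nsmul_eq_mul, mul_comm]
  rw [Finset.sum_congr rfl (fun j _ => h j)]
  exact Finset.sum_fiberwise Finset.univ (fun r => a r) (fun r => a r)
end App

section App2
variable {n d p : ℕ} [NeZero p]

def Acond (n d p : ℕ) [NeZero p] (v : Fin n → ZMod p) : Finset (Fin n → Fin d → ZMod p) :=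
  Finset.univ.filter (fun a => ∀ k, ∑ r, a k r = 0)

lemma step1 (v : Fin n → ZMod p) :
    (Finset.univ.filter (fun σ : Equiv.Perm (Fin n × Fin d) =>
        (∀ x, σ (σ x) = x) ∧ (∀ x, σ x ≠ x) ∧
        Matrix.mulVec ((adjMat n d σ).map (Int.cast : ℤ → ZMod p)) v = 0)).card
      = ∑ a ∈ Acond n d p v, FFM p (Mof v a) := by
  classical
  set S := Finset.univ.filter (fun σ : Equiv.Perm (Fin n × Fin d) =>
        (∀ x, σ (σ x) = x) ∧ (∀ x, σ x ≠ x) ∧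
        Matrix.mulVec ((adjMat n d σ).map (Int.cast : ℤ → ZMod p)) v = 0) with hS
  have hmaps : ∀ σ ∈ S, (fun k r => v ((σ (k, r)).1)) ∈
      (Finset.univ : Finset (Fin n → Fin d → ZMod p)) := fun _ _ => Finset.mem_univ _
  rw [Finset.card_eq_sum_card_fiberwise hmaps]
  have key : ∀ a : Fin n → Fin d → ZMod p,
      (S.filter (fun σ => (fun k r => v ((σ (k, r)).1)) = a)).card
        = if (∀ k, ∑ r, a k r = 0) then FFM p (Mof v a) else 0 := by
    intro a
    by_cases hcond : (∀ k, ∑ r : Fin d, a k r = 0)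
    · rw [if_pos hcond]
      have hset : S.filter (fun σ => (fun k r => v ((σ (k, r)).1)) = a)
          = InvS (colh v a) Finset.univ := by
        ext σ
        simp only [hS, InvS, Finset.mem_filter, Finset.mem_univ, true_and]
        constructor
        · rintro ⟨⟨h1, h2, h3⟩, hL⟩
          refine ⟨h1, fun x _ => ⟨h2 x, ?_⟩, fun x hx => absurd trivial hx⟩
          have hL1 : ∀ k r, v ((σ (k, r)).1) = a k r := fun k r => congrFun (congrFun hL k) r
          show (v ((σ x).1), a (σ x).1 (σ x).2) = (a x.1 x.2, v x.1)
          have e1 : v ((σ x).1) = a x.1 x.2 := by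
            have := hL1 x.1 x.2
            rwa [Prod.mk.eta] at this
          have e2 : a (σ x).1 (σ x).2 = v x.1 := by
            have := hL1 (σ x).1 (σ x).2
            rw [Prod.mk.eta, h1 x] at this
            exact this.symm
          rw [e1, e2]
        · rintro ⟨h1, h2, -⟩
          have hcol : ∀ x : Fin n × Fin d, v ((σ x).1) = a x.1 x.2 := by
            intro x
            exact congrArg Prod.fst (h2 x trivial).2
          refine ⟨⟨h1, fun x => (h2 x trivial).1, ?_⟩, ?_⟩
          · funext k
            simp only [Pi.zero_apply]
            rw [mulVec_eq, Finset.sum_congr rfl (fun r _ => hcol (k, r))]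
            exact hcond k
          · funext k r
            exact hcol (k, r)
      rw [hset, card_InvS]
      unfold FFc FFM
      congr 1
      · exact Finset.prod_congr rfl (fun q _ => by rw [colCount_univ, colCount_univ])
      · exact Finset.prod_congr rfl (fun i _ => by rw [colCount_univ])
    · rw [if_neg hcond]
      rw [Finset.card_eq_zero, Finset.filter_eq_empty_iff]
      intro σ hσ hL
      obtain ⟨-, h1, h2, h3⟩ := Finset.mem_filter.1 hσ
      apply hcond
      intro k
      have hL1 : ∀ k r, v ((σ (k, r)).1) = a k r := fun k r => congrFun (congrFun hL k) r
      calc ∑ r : Fin d, a k r = ∑ r : Fin d, v ((σ (k, r)).1) :=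
            (Finset.sum_congr rfl (fun r _ => hL1 k r)).symm
        _ = Matrix.mulVec ((adjMat n d σ).map (Int.cast : ℤ → ZMod p)) v k :=
            (mulVec_eq σ v k).symm
        _ = 0 := by rw [h3]; rfl
  rw [Finset.sum_congr rfl (fun a _ => key a)]
  exact (Finset.sum_filter _ _).symm

lemma Mof_rowsum (v : Fin n → ZMod p) (a : Fin n → Fin d → ZMod p) (i : ZMod p) :
    ∑ j, Mof v a i j = d * countv v i := by
  unfold Mof
  rw [Finset.sum_comm]
  rw [Finset.sum_congr rfl (fun k _ => Phi_total (a k))]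
  rw [Finset.sum_const, smul_eq_mul]
  exact Nat.mul_comm _ _

lemma Mof_cong (v : Fin n → ZMod p) (a : Fin n → Fin d → ZMod p)
    (ha : ∀ k, ∑ r, a k r = 0) (i : ZMod p) :
    ∑ j : ZMod p, j * (Mof v a i j : ZMod p) = 0 := by
  unfold Mof
  have h1 : ∀ j : ZMod p, j * ((∑ k ∈ Finset.univ.filter (fun k => v k = i),
      Phi (a k) j : ℕ) : ZMod p)
      = ∑ k ∈ Finset.univ.filter (fun k => v k = i), j * (Phi (a k) j : ZMod p) := by
    intro j
    rw [Nat.cast_sum, Finset.mul_sum]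
  rw [Finset.sum_congr rfl (fun j _ => h1 j), Finset.sum_comm]
  rw [Finset.sum_congr rfl (fun k _ => Phi_weighted (a k))]
  exact Finset.sum_eq_zero (fun k _ => ha k)

def emap (v : Fin n → ZMod p) (i : ZMod p) :
    Fin (countv v i) ≃ {x // x ∈ Finset.univ.filter (fun k => v k = i)} :=
  ((Finset.univ.filter (fun k => v k = i)).orderIsoOfFin rfl).toEquiv

def Gmap (v : Fin n → ZMod p) (w : ∀ i : ZMod p, Fin (countv v i) → Fin d → ZMod p) :
    Fin n → Fin d → ZMod p :=
  fun k => w (v k) ((emap v (v k)).symm ⟨k, Finset.mem_filter.2 ⟨Finset.mem_univ k, rfl⟩⟩)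

def Fmap (v : Fin n → ZMod p) (a : Fin n → Fin d → ZMod p) :
    ∀ i : ZMod p, Fin (countv v i) → Fin d → ZMod p :=
  fun i k' => a ((emap v i k').1)

lemma hG_eq (v : Fin n → ZMod p) (w : ∀ i : ZMod p, Fin (countv v i) → Fin d → ZMod p)
    (i : ZMod p) (k : Fin n) (hmem : k ∈ Finset.univ.filter (fun k => v k = i)) :
    Gmap v w k = w i ((emap v i).symm ⟨k, hmem⟩) := by
  have hk : v k = i := (Finset.mem_filter.1 hmem).2
  subst hk
  rfl

lemma hFG_eq (v : Fin n → ZMod p) (w : ∀ i : ZMod p, Fin (countv v i) → Fin d → ZMod p)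
    (i : ZMod p) (k' : Fin (countv v i)) :
    Gmap v w ((emap v i k').1) = w i k' := by
  rw [hG_eq v w i ((emap v i k').1) (emap v i k').2, Subtype.coe_eta,
    Equiv.symm_apply_apply]

lemma hsum_e (v : Fin n → ZMod p) (i : ZMod p) (b : Fin n → ℕ) :
    ∑ k' : Fin (countv v i), b ((emap v i k').1)
      = ∑ k ∈ Finset.univ.filter (fun k => v k = i), b k := by
  calc ∑ k' : Fin (countv v i), b ((emap v i k').1)
      = ∑ x : {x // x ∈ Finset.univ.filter (fun k => v k = i)}, b x.1 :=
        Equiv.sum_comp (emap v i) (fun x => b x.1)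
    _ = ∑ x ∈ (Finset.univ.filter (fun k => v k = i)).attach, b x.1 := by
        rw [Finset.univ_eq_attach]
    _ = ∑ k ∈ Finset.univ.filter (fun k => v k = i), b k := Finset.sum_attach _ _

lemma step3 (v : Fin n → ZMod p) (M : ZMod p → ZMod p → ℕ) :
    ((Acond n d p v).filter (fun a => Mof v a = M)).card
      = ∏ i : ZMod p, ((Finset.univ.filter (fun a : Fin (countv v i) → Fin d → ZMod p =>
          (∀ k, ∑ r, a k r = 0) ∧
          (∀ j : ZMod p, (∑ k, Phi (a k) j) = M i j))).card) := by
  classical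
  rw [← Fintype.card_piFinset]
  apply Finset.card_bij' (fun a _ => Fmap v a) (fun w _ => Gmap v w)
  · -- forward into piFinset
    intro a ha
    obtain ⟨haA, haM⟩ := Finset.mem_filter.1 ha
    have haC : ∀ k, ∑ r, a k r = 0 := (Finset.mem_filter.1 haA).2
    rw [Fintype.mem_piFinset]
    intro i
    refine Finset.mem_filter.2 ⟨Finset.mem_univ _, fun k' => haC _, fun j => ?_⟩
    calc ∑ k', Phi (Fmap v a i k') j
        = ∑ k ∈ Finset.univ.filter (fun k => v k = i), Phi (a k) j :=
          hsum_e v i (fun k => Phi (a k) j)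
      _ = M i j := congrFun (congrFun haM i) j
  · -- backward into the fiber
    intro w hw
    rw [Fintype.mem_piFinset] at hw
    have hw' : ∀ i, (∀ k', ∑ r, w i k' r = 0) ∧
        (∀ j, ∑ k', Phi (w i k') j = M i j) := fun i => (Finset.mem_filter.1 (hw i)).2
    refine Finset.mem_filter.2 ⟨Finset.mem_filter.2 ⟨Finset.mem_univ _, fun k => ?_⟩, ?_⟩
    · exact (hw' (v k)).1 _
    · funext i j
      show ∑ k ∈ Finset.univ.filter (fun k => v k = i), Phi (Gmap v w k) j = M i j
      calc ∑ k ∈ Finset.univ.filter (fun k => v k = i), Phi (Gmap v w k) j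
          = ∑ k', Phi (Gmap v w ((emap v i k').1)) j :=
            (hsum_e v i (fun k => Phi (Gmap v w k) j)).symm
        _ = ∑ k', Phi (w i k') j :=
            Finset.sum_congr rfl (fun k' _ => by rw [hFG_eq])
        _ = M i j := (hw' i).2 j
  · intro a ha
    funext k
    show a ((emap v (v k) ((emap v (v k)).symm ⟨k, _⟩)).1) = a k
    rw [Equiv.apply_symm_apply]
  · intro w hw
    funext i k'
    exact hFG_eq v w i k'

lemma gg_odd' (m : ℕ) (hm : ¬ Even m) : gg m = 0 := by
  induction m using Nat.strong_induction_on with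
  | _ m ih =>
    match m, hm with
    | 1, _ => simp [gg]
    | (n+2), hm =>
      have : ¬ Even n := by simpa [Nat.even_add] using hm
      simp [gg, ih n (by omega) this]


lemma FFM_zero_of_not_symm {M : ZMod p → ZMod p → ℕ}
    (h : ¬ ∀ i j : ZMod p, M i j = M j i) : FFM p M = 0 := by
  push_neg at h
  obtain ⟨i, j, hne⟩ := h
  have hij : i ≠ j := fun h' => hne (by rw [h'])
  have hv : i.val ≠ j.val := fun h' => hij (ZMod.val_injective p h')
  unfold FFM
  rcases lt_or_gt_of_ne hv with hlt | hgt
  · exact mul_eq_zero_of_left (Finset.prod_eq_zero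
      (Finset.mem_filter.2 ⟨Finset.mem_univ ((i, j) : ZMod p × ZMod p), hlt⟩)
      (by simp [ff, hne])) _
  · exact mul_eq_zero_of_left (Finset.prod_eq_zero
      (Finset.mem_filter.2 ⟨Finset.mem_univ ((j, i) : ZMod p × ZMod p), hgt⟩)
      (by unfold ff; rw [if_neg (fun h' => hne h'.symm)])) _

lemma FFM_zero_of_not_even {M : ZMod p → ZMod p → ℕ} (i : ZMod p)
    (h : ¬ Even (M i i)) : FFM p M = 0 :=
  mul_eq_zero_of_right _ (Finset.prod_eq_zero (Finset.mem_univ i) (gg_odd' _ h))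

lemma FFM_cast (M : ZMod p → ZMod p → ℕ) (hsym : ∀ i j : ZMod p, M i j = M j i)
    (heven : ∀ i, Even (M i i)) :
    (FFM p M : ℚ)
      = (∏ q ∈ Finset.univ.filter (fun q : ZMod p × ZMod p => q.1.val < q.2.val),
          ((M q.1 q.2).factorial : ℚ)) *
        ∏ i : ZMod p,
          ((M i i).factorial : ℚ) / (2 ^ (M i i / 2) * ((M i i / 2).factorial : ℚ)) := by
  unfold FFM
  push_cast
  congr 1
  · refine Finset.prod_congr rfl (fun q _ => ?_)
    unfold ff
    rw [if_pos (hsym q.1 q.2)]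
  · exact Finset.prod_congr rfl (fun i _ => gg_cast_q _ (heven i))

end App2

/-- Random walk representation (undirected case): for fixed `v ∈ 𝔽_p^n` with
`Φ(v) = (n_0, …, n_{p-1})`, the number of fixed-point-free involutions `σ` of `[n]×[d]`
with `A(σ) v = 0` over `𝔽_p` equals the sum, over symmetric `p×p` matrices
`M = [m_{ij}]` of nonnegative integers with even diagonal, row sums `d n_i` and
`Σ_j j m_{ij} ≡ 0 (mod p)`, of
`(∏_{i<j} m_{ij}!) (∏_i m_{ii}!/(2^{m_{ii}/2}(m_{ii}/2)!)) ∏_i #{walks}`. -/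
theorem undirected_walk_representation (d : ℕ) (hd : 3 ≤ d) (p : ℕ) [Fact p.Prime]
    (n : ℕ) (hn : 0 < n) (hnd : Even (n * d)) (v : Fin n → ZMod p) :
    ((Finset.univ.filter (fun σ : Equiv.Perm (Fin n × Fin d) =>
        (∀ x, σ (σ x) = x) ∧ (∀ x, σ x ≠ x) ∧
        Matrix.mulVec ((adjMat n d σ).map (Int.cast : ℤ → ZMod p)) v = 0)).card : ℚ)
      = ∑ᶠ M ∈ {M : ZMod p → ZMod p → ℕ |
            (∀ i j, M i j = M j i) ∧ (∀ i, Even (M i i)) ∧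
            (∀ i, (∑ j, M i j) = d * countv v i) ∧
            (∀ i, (∑ j : ZMod p, j * (M i j : ZMod p)) = 0)},
          (∏ q ∈ Finset.univ.filter (fun q : ZMod p × ZMod p => q.1.val < q.2.val),
              ((M q.1 q.2).factorial : ℚ)) *
          (∏ i : ZMod p,
              ((M i i).factorial : ℚ) / (2 ^ (M i i / 2) * ((M i i / 2).factorial : ℚ))) *
          (∏ i : ZMod p,
            ((Finset.univ.filter (fun a : Fin (countv v i) → Fin d → ZMod p =>
              (∀ k, ∑ r, a k r = 0) ∧
              (∀ j : ZMod p, (∑ k, Phi (a k) j) = M i j))).card : ℚ)) := by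
  classical
  haveI : NeZero p := ⟨(Fact.out : p.Prime).ne_zero⟩
  set T : Finset (ZMod p → ZMod p → ℕ) := (Acond n d p v).image (Mof v) with hT
  set cnt : (ZMod p → ZMod p → ℕ) → ℕ :=
    fun M => ((Acond n d p v).filter (fun a => Mof v a = M)).card with hcnt
  set B : Finset (ZMod p → ZMod p → ℕ) :=
    Finset.image (fun (g : ZMod p → ZMod p → Fin (d * n + 1)) => fun i j => ((g i j : ℕ)))
      Finset.univ with hB
  have hBmem : ∀ M : ZMod p → ZMod p → ℕ, (∀ i, (∑ j, M i j) = d * countv v i) → M ∈ B := by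
    intro M hrow
    have hbound : ∀ i j, M i j < d * n + 1 := by
      intro i j
      have h1 : M i j ≤ ∑ j', M i j' :=
        Finset.single_le_sum (fun _ _ => Nat.zero_le _) (Finset.mem_univ j)
      have h2 : countv v i ≤ n := by
        have h3 := Finset.card_filter_le (Finset.univ : Finset (Fin n)) (fun k => v k = i)
        simpa [countv] using h3
      have h4 : M i j ≤ d * n :=
        calc M i j ≤ d * countv v i := by rw [← hrow i]; exact h1
          _ ≤ d * n := Nat.mul_le_mul_left d h2
      omega
    refine Finset.mem_image.2 ⟨fun i j => ⟨M i j, hbound i j⟩, Finset.mem_univ _, ?_⟩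
    funext i j
    rfl
  set P : (ZMod p → ZMod p → ℕ) → Prop := fun M =>
    (∀ i j, M i j = M j i) ∧ (∀ i, Even (M i i)) ∧
    (∀ i, (∑ j, M i j) = d * countv v i) ∧
    (∀ i, (∑ j : ZMod p, j * (M i j : ZMod p)) = 0) with hP
  set T' : Finset (ZMod p → ZMod p → ℕ) := B.filter P with hT'
  have hsetEq : {M : ZMod p → ZMod p → ℕ |
      (∀ i j, M i j = M j i) ∧ (∀ i, Even (M i i)) ∧
      (∀ i, (∑ j, M i j) = d * countv v i) ∧
      (∀ i, (∑ j : ZMod p, j * (M i j : ZMod p)) = 0)} = (T' : Set _) := by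
    ext M
    simp only [Set.mem_setOf_eq, Finset.coe_filter, hT']
    constructor
    · intro h
      exact ⟨hBmem M h.2.2.1, h⟩
    · exact fun h => h.2
  have keyN : ∑ a ∈ Acond n d p v, FFM p (Mof v a) = ∑ M ∈ T, cnt M * FFM p M := by
    rw [← Finset.sum_fiberwise_of_maps_to (fun a ha => Finset.mem_image_of_mem (Mof v) ha)
      (fun a => FFM p (Mof v a))]
    refine Finset.sum_congr rfl (fun M hM => ?_)
    rw [Finset.sum_congr rfl (fun a ha => by rw [(Finset.mem_filter.1 ha).2]),
      Finset.sum_const, smul_eq_mul]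
  have hcntcast : ∀ M : ZMod p → ZMod p → ℕ, (cnt M : ℚ)
      = ∏ i : ZMod p, ((Finset.univ.filter (fun a : Fin (countv v i) → Fin d → ZMod p =>
          (∀ k, ∑ r, a k r = 0) ∧
          (∀ j : ZMod p, (∑ k, Phi (a k) j) = M i j))).card : ℚ) := by
    intro M
    rw [show cnt M = ((Acond n d p v).filter (fun a => Mof v a = M)).card from rfl, step3 v M]
    push_cast
    rfl
  have hvan1 : ∀ M ∈ T, M ∉ T ∩ T' → ((cnt M : ℚ) * (FFM p M : ℚ)) = 0 := by
    intro M hMT hMnot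
    have hMT' : M ∉ T' := fun h => hMnot (Finset.mem_inter.2 ⟨hMT, h⟩)
    obtain ⟨a, haA, rfl⟩ := Finset.mem_image.1 hMT
    have hrow : ∀ i, (∑ j, Mof v a i j) = d * countv v i := Mof_rowsum v a
    have hcong : ∀ i, (∑ j : ZMod p, j * (Mof v a i j : ZMod p)) = 0 :=
      Mof_cong v a (Finset.mem_filter.1 haA).2
    by_cases hsym : ∀ i j : ZMod p, Mof v a i j = Mof v a j i
    · by_cases heven : ∀ i : ZMod p, Even (Mof v a i i)
      · exact absurd (Finset.mem_filter.2 ⟨hBmem _ hrow, hsym, heven, hrow, hcong⟩) hMT'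
      · push_neg at heven
        obtain ⟨i, hi⟩ := heven
        rw [FFM_zero_of_not_even i hi]
        simp
    · rw [FFM_zero_of_not_symm hsym]
      simp
  have hvan2 : ∀ M ∈ T', M ∉ T ∩ T' →
      ((∏ q ∈ Finset.univ.filter (fun q : ZMod p × ZMod p => q.1.val < q.2.val),
          ((M q.1 q.2).factorial : ℚ)) *
        (∏ i : ZMod p,
            ((M i i).factorial : ℚ) / (2 ^ (M i i / 2) * ((M i i / 2).factorial : ℚ))) *
        (∏ i : ZMod p,
          ((Finset.univ.filter (fun a : Fin (countv v i) → Fin d → ZMod p =>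
            (∀ k, ∑ r, a k r = 0) ∧
            (∀ j : ZMod p, (∑ k, Phi (a k) j) = M i j))).card : ℚ))) = 0 := by
    intro M hMT' hMnot
    have hMT : M ∉ T := fun h => hMnot (Finset.mem_inter.2 ⟨h, hMT'⟩)
    have hcnt0 : cnt M = 0 := by
      rw [show cnt M = ((Acond n d p v).filter (fun a => Mof v a = M)).card from rfl,
        Finset.card_eq_zero, Finset.filter_eq_empty_iff]
      intro a ha hMa
      exact hMT (Finset.mem_image.2 ⟨a, ha, hMa⟩)
    have hC : (∏ i : ZMod p,
        ((Finset.univ.filter (fun a : Fin (countv v i) → Fin d → ZMod p =>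
          (∀ k, ∑ r, a k r = 0) ∧
          (∀ j : ZMod p, (∑ k, Phi (a k) j) = M i j))).card : ℚ)) = 0 := by
      rw [← hcntcast M, hcnt0]
      simp
    rw [hC, mul_zero]
  have hpoint : ∀ M ∈ T ∩ T', ((cnt M : ℚ) * (FFM p M : ℚ))
      = (∏ q ∈ Finset.univ.filter (fun q : ZMod p × ZMod p => q.1.val < q.2.val),
          ((M q.1 q.2).factorial : ℚ)) *
        (∏ i : ZMod p,
            ((M i i).factorial : ℚ) / (2 ^ (M i i / 2) * ((M i i / 2).factorial : ℚ))) *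
        (∏ i : ZMod p,
          ((Finset.univ.filter (fun a : Fin (countv v i) → Fin d → ZMod p =>
            (∀ k, ∑ r, a k r = 0) ∧
            (∀ j : ZMod p, (∑ k, Phi (a k) j) = M i j))).card : ℚ)) := by
    intro M hM
    have hPM : P M := (Finset.mem_filter.1 (Finset.mem_inter.1 hM).2).2
    obtain ⟨hsym, heven, -, -⟩ := hPM
    rw [FFM_cast M hsym heven, hcntcast M]
    ring
  rw [hsetEq, finsum_mem_coe_finset, step1 v, keyN]
  push_cast
  calc ∑ M ∈ T, (cnt M : ℚ) * (FFM p M : ℚ)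
      = ∑ M ∈ T ∩ T', (cnt M : ℚ) * (FFM p M : ℚ) :=
        (Finset.sum_subset Finset.inter_subset_left hvan1).symm
    _ = ∑ M ∈ T ∩ T',
        (∏ q ∈ Finset.univ.filter (fun q : ZMod p × ZMod p => q.1.val < q.2.val),
            ((M q.1 q.2).factorial : ℚ)) *
        (∏ i : ZMod p,
            ((M i i).factorial : ℚ) / (2 ^ (M i i / 2) * ((M i i / 2).factorial : ℚ))) *
        (∏ i : ZMod p,
          ((Finset.univ.filter (fun a : Fin (countv v i) → Fin d → ZMod p =>
            (∀ k, ∑ r, a k r = 0) ∧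
            (∀ j : ZMod p, (∑ k, Phi (a k) j) = M i j))).card : ℚ)) :=
        Finset.sum_congr rfl hpoint
    _ = _ := Finset.sum_subset Finset.inter_subset_right hvan2
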